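/- Let S be an A-algebra which is J-adically separated for an ideal J = (p, d), equipped with a Frobenius lift φ, and write S = ⋃_{ε>0} S_ε where S_ε = {s : γ_ε(s) > −∞} for Gauss norms γ_ε with respect to a presentation by generators x_1,…,x_r. If φ(x_i) = x_i^p + p·δ(x_i) and ε > 0 is chosen so that γ_ε(p·δ(x_i)) > 0 for all i, then φ maps S_ε into S_{ε/p}. -/

import Mathlib

/-!
Write `f = P + t` with `P` a polynomial and `t` having only monomials of degree at least `N`.
On `P = ∑ a_K X^K` the bound comes from submultiplicativity of `γ_{ε/p}` and
`γ_{ε/p}(φ X_i) ≥ -ε`, which holds because `γ_{ε/p}(X_i^p) ≥ -ε` and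
`γ_{ε/p}(p δ_i) ≥ γ_ε(p δ_i) > 0`. As `φ` need not be continuous, the tail is treated
algebraically: `t ∈ (X)^N`, hence `φ t ∈ (J, X)^N`, whose coefficient at `X^I` lies in
`J ^ (N - |I|)`; for `N` large this does not affect the coefficient of `φ f` at `X^I`.
-/

/-- The `J`-adic valuation `v_J(a) = sup {n : a ∈ J^n} ∈ ℕ ∪ {∞}`, viewed in `EReal`. -/
noncomputable def vJ {A : Type*} [CommRing A] (J : Ideal A) (a : A) : EReal :=
  ⨆ n : {n : ℕ // a ∈ J ^ n}, ((n : ℕ) : EReal)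

/-- The Gauss norm `γ_ε(∑_I a_I x^I) = inf_I (v_J(a_I) − ε·|I|)` with respect to a
presentation by generators `x_1, …, x_r` (modelled by power series variables). -/
noncomputable def gaussNorm {A : Type*} [CommRing A] (J : Ideal A) {r : ℕ} (ε : ℝ)
    (f : MvPowerSeries (Fin r) A) : EReal :=
  ⨅ I : Fin r →₀ ℕ,
    (vJ J (MvPowerSeries.coeff (R := A) I f) - ((ε * (I.sum fun _ n => (n : ℝ))) : ℝ))

open MvPowerSeries (C X coeff monomial)

section vJ

variable {A : Type*} [CommRing A] (J : Ideal A)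

lemma natCast_le_vJ {a : A} {n : ℕ} (h : a ∈ J ^ n) : (n : EReal) ≤ vJ J a :=
  le_iSup_of_le ⟨n, h⟩ le_rfl

lemma coe_le_vJ_iff {x : ℝ} {a : A} : (x : EReal) ≤ vJ J a ↔ a ∈ J ^ ⌈x⌉₊ := by
  refine ⟨fun h => ?_, fun h => le_trans ?_ (natCast_le_vJ J h)⟩
  · by_contra ha
    have hvJ : vJ J a ≤ ((⌈x⌉₊ - 1 : ℕ) : EReal) := iSup_le fun ⟨n, hn⟩ => by
      have : n < ⌈x⌉₊ := lt_of_not_ge fun hle => ha (Ideal.pow_le_pow_right hle hn)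
      exact_mod_cast Nat.le_sub_one_of_lt this
    have hceil : ⌈x⌉₊ ≠ 0 := fun h0 => ha (by simp [h0])
    have hx : x ≤ ((⌈x⌉₊ - 1 : ℕ) : ℝ) := by
      rw [← EReal.coe_le_coe_iff, EReal.coe_coe_eq_natCast]
      exact h.trans hvJ
    exact (Nat.lt_ceil.1 (Nat.sub_one_lt hceil)).not_ge hx
  · rw [← EReal.coe_coe_eq_natCast]
    exact_mod_cast Nat.le_ceil x

end vJ

section gaussNorm

variable {A : Type*} [CommRing A] {J : Ideal A} {r : ℕ}

lemma sum_natCast_eq_degree {σ : Type*} (I : σ →₀ ℕ) :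
    (I.sum fun _ n => (n : ℝ)) = I.degree := by
  simp [Finsupp.sum, Finsupp.degree_apply]

lemma coe_le_gaussNorm_iff {c ε : ℝ} {f : MvPowerSeries (Fin r) A} :
    (c : EReal) ≤ gaussNorm J ε f ↔ ∀ I, coeff I f ∈ J ^ ⌈c + ε * I.degree⌉₊ := by
  simp only [gaussNorm, le_iInf_iff, sum_natCast_eq_degree]
  refine forall_congr' fun I => ?_
  rw [EReal.le_sub_iff_add_le (.inl (EReal.coe_ne_bot _)) (.inl (EReal.coe_ne_top _)),
    ← EReal.coe_add, coe_le_vJ_iff]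

lemma gaussNorm_anti {ε ε' : ℝ} (h : ε' ≤ ε) (f : MvPowerSeries (Fin r) A) :
    gaussNorm J ε f ≤ gaussNorm J ε' f := by
  refine iInf_mono fun I => EReal.sub_le_sub le_rfl (EReal.coe_le_coe_iff.2 ?_)
  rw [sum_natCast_eq_degree]
  exact mul_le_mul_of_nonneg_right h (Nat.cast_nonneg _)

lemma gaussNorm_nonneg {ε : ℝ} (hε : ε ≤ 0) (f : MvPowerSeries (Fin r) A) :
    ((0 : ℝ) : EReal) ≤ gaussNorm J ε f := by
  refine coe_le_gaussNorm_iff.2 fun I => ?_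
  rw [Nat.ceil_eq_zero.2 (by nlinarith [(Nat.cast_nonneg I.degree : (0 : ℝ) ≤ I.degree)]),
    pow_zero, Ideal.one_eq_top]
  exact Submodule.mem_top

lemma coe_le_gaussNorm_add {c ε : ℝ} {f g : MvPowerSeries (Fin r) A}
    (hf : (c : EReal) ≤ gaussNorm J ε f) (hg : (c : EReal) ≤ gaussNorm J ε g) :
    (c : EReal) ≤ gaussNorm J ε (f + g) :=
  coe_le_gaussNorm_iff.2 fun I => by
    rw [map_add]
    exact add_mem (coe_le_gaussNorm_iff.1 hf I) (coe_le_gaussNorm_iff.1 hg I)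

lemma coe_le_gaussNorm_sum {ι : Type*} {c ε : ℝ} (s : Finset ι)
    {f : ι → MvPowerSeries (Fin r) A} (h : ∀ i ∈ s, (c : EReal) ≤ gaussNorm J ε (f i)) :
    (c : EReal) ≤ gaussNorm J ε (∑ i ∈ s, f i) :=
  coe_le_gaussNorm_iff.2 fun I => by
    rw [map_sum]
    exact Ideal.sum_mem _ fun i hi => coe_le_gaussNorm_iff.1 (h i hi) I

lemma coe_le_gaussNorm_mul {c₁ c₂ ε : ℝ} {f g : MvPowerSeries (Fin r) A}
    (hf : (c₁ : EReal) ≤ gaussNorm J ε f) (hg : (c₂ : EReal) ≤ gaussNorm J ε g) :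
    ((c₁ + c₂ : ℝ) : EReal) ≤ gaussNorm J ε (f * g) := by
  classical
  rw [coe_le_gaussNorm_iff] at hf hg ⊢
  intro I
  rw [MvPowerSeries.coeff_mul]
  refine Ideal.sum_mem _ fun ⟨I₁, I₂⟩ hI => ?_
  rw [Finset.HasAntidiagonal.mem_antidiagonal] at hI
  refine Ideal.pow_le_pow_right ?_ (pow_add J _ _ ▸ Ideal.mul_mem_mul (hf I₁) (hg I₂))
  calc ⌈c₁ + c₂ + ε * I.degree⌉₊
      = ⌈(c₁ + ε * I₁.degree) + (c₂ + ε * I₂.degree)⌉₊ := by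
        rw [← hI, map_add]; push_cast; ring_nf
    _ ≤ _ := Nat.ceil_add_le _ _

lemma coe_le_gaussNorm_prod {ι : Type*} {ε : ℝ} (s : Finset ι) {c : ι → ℝ}
    {f : ι → MvPowerSeries (Fin r) A} (h : ∀ i ∈ s, (c i : EReal) ≤ gaussNorm J ε (f i)) :
    ((∑ i ∈ s, c i : ℝ) : EReal) ≤ gaussNorm J ε (∏ i ∈ s, f i) := by
  classical
  induction s using Finset.cons_induction with
  | empty =>
    refine coe_le_gaussNorm_iff.2 fun I => ?_
    rw [Finset.prod_empty, MvPowerSeries.coeff_one]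
    split_ifs with hI
    · simp [hI]
    · exact zero_mem _
  | cons a s ha ih =>
    rw [Finset.sum_cons, Finset.prod_cons]
    exact coe_le_gaussNorm_mul (h a (Finset.mem_cons_self a s))
      (ih fun i hi => h i (Finset.mem_cons_of_mem hi))

lemma coe_le_gaussNorm_pow {c ε : ℝ} {f : MvPowerSeries (Fin r) A}
    (h : (c : EReal) ≤ gaussNorm J ε f) (k : ℕ) :
    ((k * c : ℝ) : EReal) ≤ gaussNorm J ε (f ^ k) := by
  simpa using coe_le_gaussNorm_prod (Finset.range k) (c := fun _ => c) (f := fun _ => f)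
    fun _ _ => h

lemma coe_le_gaussNorm_C {x : ℝ} (ε : ℝ) {a : A} (ha : a ∈ J ^ ⌈x⌉₊) :
    (x : EReal) ≤ gaussNorm J ε (C a : MvPowerSeries (Fin r) A) := by
  classical
  refine coe_le_gaussNorm_iff.2 fun I => ?_
  rw [MvPowerSeries.coeff_C]
  split_ifs with hI
  · simpa [hI] using ha
  · exact zero_mem _

lemma coe_le_gaussNorm_X_pow (ε : ℝ) (i : Fin r) (n : ℕ) :
    ((-(ε * n) : ℝ) : EReal) ≤ gaussNorm J ε (X i ^ n : MvPowerSeries (Fin r) A) := by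
  classical
  refine coe_le_gaussNorm_iff.2 fun I => ?_
  rw [MvPowerSeries.coeff_X_pow]
  split_ifs with hI
  · simp [hI]
  · exact zero_mem _

end gaussNorm

section adicFiltration

variable {A : Type*} [CommRing A] {r : ℕ}

/-- `γ_{-1}` measures the `(J, X₁, …, X_r)`-adic order: `γ_{-1}(g) ≥ N` says that the coefficient
of `X^K` in `g` lies in `J ^ (N - |K|)`. -/
def adicFiltration (J : Ideal A) (N : ℕ) : Ideal (MvPowerSeries (Fin r) A) where
  carrier := {g | ((N : ℝ) : EReal) ≤ gaussNorm J (-1) g}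
  add_mem' := coe_le_gaussNorm_add
  zero_mem' := coe_le_gaussNorm_iff.2 fun I => by simp
  smul_mem' f g hg := by
    simpa using coe_le_gaussNorm_mul (gaussNorm_nonneg (by norm_num) f) hg

variable {J : Ideal A}

lemma mem_adicFiltration {N : ℕ} {g : MvPowerSeries (Fin r) A} :
    g ∈ adicFiltration J N ↔ ((N : ℝ) : EReal) ≤ gaussNorm J (-1) g :=
  Iff.rfl

lemma adicFiltration_mul_le (m n : ℕ) :
    adicFiltration J m * adicFiltration J n ≤ adicFiltration (r := r) J (m + n) :=
  Ideal.mul_le.2 fun f hf g hg => by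
    simpa [mem_adicFiltration] using coe_le_gaussNorm_mul hf hg

lemma pow_le_adicFiltration {I : Ideal (MvPowerSeries (Fin r) A)} (h : I ≤ adicFiltration J 1)
    (N : ℕ) : I ^ N ≤ adicFiltration J N := by
  induction N with
  | zero =>
    rw [pow_zero, Ideal.one_eq_top]
    exact fun g _ => by
      simpa [mem_adicFiltration] using gaussNorm_nonneg (J := J) (by norm_num : (-1 : ℝ) ≤ 0) g
  | succ N ih => exact (Ideal.mul_mono ih h).trans (adicFiltration_mul_le N 1)

lemma X_mem_adicFiltration (i : Fin r) : X i ∈ adicFiltration (r := r) J 1 := by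
  simpa [mem_adicFiltration] using coe_le_gaussNorm_X_pow (J := J) (-1) i 1

lemma C_mem_adicFiltration {a : A} (ha : a ∈ J) : C a ∈ adicFiltration (r := r) J 1 :=
  coe_le_gaussNorm_C (-1) (by simpa using ha)

lemma coeff_mem_of_mem_adicFiltration {n : ℕ} {I : Fin r →₀ ℕ} {g : MvPowerSeries (Fin r) A}
    (hg : g ∈ adicFiltration J (n + I.degree)) : coeff I g ∈ J ^ n := by
  simpa using coe_le_gaussNorm_iff.1 hg I

end adicFiltration

lemma Finsupp.eq_min'_support_iff {σ : Type*} [LinearOrder σ] {L : σ →₀ ℕ} (hL : L ≠ 0)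
    {i : σ} :
    i = L.support.min' (Finsupp.support_nonempty_iff.2 hL) ↔
      Finsupp.single i 1 ≤ L ∧ ∀ j < i, L j = 0 := by
  have hleast := L.support.isLeast_min' (Finsupp.support_nonempty_iff.2 hL)
  rw [Finsupp.single_le_iff, Nat.one_le_iff_ne_zero, ← Finsupp.mem_support_iff]
  constructor
  · rintro rfl
    exact ⟨hleast.1, fun j hj => Finsupp.notMem_support_iff.1 fun h => (hleast.2 h).not_gt hj⟩
  · rintro ⟨hi, hlt⟩
    refine (hleast.unique ⟨hi, fun j hj => not_lt.1 fun h => ?_⟩).symm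
    exact Finsupp.mem_support_iff.1 hj (hlt j h)

namespace MvPowerSeries

variable {σ R : Type*}

lemma monomial_eq_C_mul_prod_X_pow [CommSemiring R] [Fintype σ] (K : σ →₀ ℕ) (a : R) :
    monomial K a = C a * ∏ i, (X i : MvPowerSeries σ R) ^ K i := by
  simp_rw [X_pow_eq]
  rw [prod_monomial, Finsupp.univ_sum_single, Finset.prod_const_one, ← monomial_zero_eq_C_apply,
    monomial_mul_monomial, zero_add, mul_one]

lemma exists_eq_sum_monomial_add_of_le_order [CommRing R] [Finite σ] (f : MvPowerSeries σ R)
    (N : ℕ) : ∃ s : Finset (σ →₀ ℕ), ∃ t : MvPowerSeries σ R,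
      f = ∑ K ∈ s, monomial K (coeff K f) + t ∧ (N : ℕ∞) ≤ t.order := by
  classical
  let s := (Finsupp.finite_of_degree_lt (σ := σ) N).toFinset
  refine ⟨s, f - ∑ K ∈ s, monomial K (coeff K f), (add_sub_cancel _ _).symm,
    nat_le_order fun K hK => ?_⟩
  simp [s, coeff_monomial, hK]

lemma exists_eq_sum_X_mul_of_le_order [Semiring R] [Fintype σ] {f : MvPowerSeries σ R} {N : ℕ}
    (hf : (N + 1 : ℕ∞) ≤ f.order) :
    ∃ g : σ → MvPowerSeries σ R, f = ∑ i, X i * g i ∧ ∀ i, (N : ℕ∞) ≤ (g i).order := by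
  classical
  let : LinearOrder σ := LinearOrder.lift' _ (Fintype.equivFin σ).injective
  -- `X i * g i` is the part of `f` made of the monomials whose smallest variable is `X i`
  let g : σ → MvPowerSeries σ R := fun i (K : σ →₀ ℕ) =>
    if ∀ j < i, (K + Finsupp.single i 1 : σ →₀ ℕ) j = 0 then coeff (K + Finsupp.single i 1) f
    else 0
  refine ⟨g, ?_, fun i => nat_le_order fun K hK => ?_⟩
  · ext L
    have hterm : ∀ i, coeff L (X i * g i) =
        if Finsupp.single i 1 ≤ L ∧ ∀ j < i, L j = 0 then coeff L f else 0 := by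
      intro i
      rw [X_def, coeff_monomial_mul, one_mul]
      by_cases hi : Finsupp.single i 1 ≤ L
      · rw [if_pos hi]
        change ite _ (coeff (L - _ + _) f) 0 = _
        simp only [hi, true_and, tsub_add_cancel_of_le hi]
      · simp [hi]
    rw [map_sum, Finset.sum_congr rfl fun i _ => hterm i]
    by_cases hL : L = 0
    · have hf0 : coeff L f = 0 := coeff_of_lt_order (lt_of_lt_of_le (by simp [hL]) hf)
      simp [hf0]
    · simp only [← Finsupp.eq_min'_support_iff hL, Finset.sum_ite_eq', Finset.mem_univ, if_true]
  · show ite _ _ _ = 0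
    split_ifs
    · refine coeff_of_lt_order (lt_of_lt_of_le ?_ hf)
      rw [map_add, Finsupp.degree_single]
      exact_mod_cast Nat.succ_lt_succ hK
    · rfl

lemma mem_span_range_X_pow_of_le_order [CommSemiring R] [Finite σ] {f : MvPowerSeries σ R}
    {N : ℕ} (hf : (N : ℕ∞) ≤ f.order) : f ∈ Ideal.span (Set.range X) ^ N := by
  cases nonempty_fintype σ
  induction N generalizing f with
  | zero => simp [Ideal.one_eq_top]
  | succ N ih =>
    obtain ⟨g, rfl, hg⟩ := exists_eq_sum_X_mul_of_le_order (by exact_mod_cast hf)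
    rw [pow_succ']
    exact Ideal.sum_mem _ fun i _ => Ideal.mul_mem_mul (Ideal.subset_span ⟨i, rfl⟩) (ih (hg i))

end MvPowerSeries

section FrobeniusLift

variable {A : Type*} [CommRing A] {J : Ideal A} {r : ℕ}
  {φ : MvPowerSeries (Fin r) A →+* MvPowerSeries (Fin r) A} {ε ε' : ℝ}

lemma coe_le_gaussNorm_map_monomial (hC : ∀ a, φ (C a) = C a)
    (hX : ∀ i, ((-ε : ℝ) : EReal) ≤ gaussNorm J ε' (φ (X i))) {c : ℝ} {K : Fin r →₀ ℕ} {a : A}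
    (ha : a ∈ J ^ ⌈c + ε * K.degree⌉₊) : (c : EReal) ≤ gaussNorm J ε' (φ (monomial K a)) := by
  rw [MvPowerSeries.monomial_eq_C_mul_prod_X_pow, map_mul, hC, map_prod]
  simp_rw [map_pow]
  have hprod := coe_le_gaussNorm_prod Finset.univ fun i _ => coe_le_gaussNorm_pow (hX i) (K i)
  convert coe_le_gaussNorm_mul (coe_le_gaussNorm_C ε' ha) hprod using 2
  rw [Finsupp.degree_eq_sum, ← Finset.sum_mul]
  push_cast
  ring

theorem coe_le_gaussNorm_map (hC : ∀ a, φ (C a) = C a)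
    (hX : ∀ i, ((-ε : ℝ) : EReal) ≤ gaussNorm J ε' (φ (X i)))
    (hX₁ : ∀ i, φ (X i) ∈ adicFiltration J 1) {c : ℝ} {f : MvPowerSeries (Fin r) A}
    (hf : (c : EReal) ≤ gaussNorm J ε f) : (c : EReal) ≤ gaussNorm J ε' (φ f) := by
  refine coe_le_gaussNorm_iff.2 fun I => ?_
  set n := ⌈c + ε' * I.degree⌉₊
  obtain ⟨s, t, hft, ht⟩ := MvPowerSeries.exists_eq_sum_monomial_add_of_le_order f (n + I.degree)
  have hpoly : (c : EReal) ≤ gaussNorm J ε' (φ (∑ K ∈ s, monomial K (coeff K f))) := by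
    rw [map_sum]
    exact coe_le_gaussNorm_sum s fun K _ =>
      coe_le_gaussNorm_map_monomial hC hX (coe_le_gaussNorm_iff.1 hf K)
  have htail : φ t ∈ adicFiltration J (n + I.degree) := by
    have hmap : Ideal.map φ (Ideal.span (Set.range X)) ≤ adicFiltration J 1 := by
      rw [Ideal.map_span, Ideal.span_le]
      rintro _ ⟨_, ⟨i, rfl⟩, rfl⟩
      exact hX₁ i
    refine pow_le_adicFiltration hmap _ ?_
    rw [← Ideal.map_pow]
    exact Ideal.mem_map_of_mem φ (MvPowerSeries.mem_span_range_X_pow_of_le_order ht)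
  rw [hft, map_add, map_add]
  exact add_mem (coe_le_gaussNorm_iff.1 hpoly I) (coeff_mem_of_mem_adicFiltration htail)

end FrobeniusLift

/-- let `φ` be a Frobenius lift on `S` (modelled on power series in the
generators `x_i`, so `φ` fixes constants and `φ(x_i) = x_i^p + p·δ(x_i)`).
If `ε > 0` is chosen so that `γ_ε(p·δ(x_i)) > 0` for all `i`, then `φ` maps
`S_ε = {s : γ_ε(s) > −∞}` into `S_{ε/p}`. -/
theorem frobenius_lift_maps_Seps (p : ℕ) [Fact p.Prime] {A : Type*} [CommRing A] (d : A)
    {r : ℕ}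
    (φ : MvPowerSeries (Fin r) A →+* MvPowerSeries (Fin r) A)
    (hconst : ∀ a : A, φ (MvPowerSeries.C (σ := Fin r) (R := A) a) = MvPowerSeries.C (σ := Fin r) (R := A) a)
    (δ : Fin r → MvPowerSeries (Fin r) A)
    (hX : ∀ i : Fin r,
      φ (MvPowerSeries.X i) = MvPowerSeries.X i ^ p + (p : MvPowerSeries (Fin r) A) * δ i)
    (ε : ℝ) (hε : 0 < ε)
    (hδ : ∀ i : Fin r,
      0 < gaussNorm (Ideal.span {(p : A), d}) ε ((p : MvPowerSeries (Fin r) A) * δ i))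
    (f : MvPowerSeries (Fin r) A)
    (hf : gaussNorm (Ideal.span {(p : A), d}) ε f ≠ ⊥) :
    gaussNorm (Ideal.span {(p : A), d}) (ε / p) (φ f) ≠ ⊥ := by
  set J := Ideal.span {(p : A), d}
  have hp : (p : A) ∈ J := Ideal.subset_span (Set.mem_insert _ _)
  have hp₀ : p ≠ 0 := (Fact.out : p.Prime).ne_zero
  have hp₁ : (1 : ℝ) ≤ p := by exact_mod_cast (Fact.out : p.Prime).one_lt.le
  have hφX : ∀ i, ((-ε : ℝ) : EReal) ≤ gaussNorm J (ε / p) (φ (X i)) := fun i => by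
    rw [hX i]
    refine coe_le_gaussNorm_add ?_ ?_
    · simpa [div_mul_cancel₀ ε (Nat.cast_ne_zero.2 hp₀)] using
        coe_le_gaussNorm_X_pow (J := J) (ε / p) i p
    · refine le_trans ?_ ((hδ i).le.trans (gaussNorm_anti (div_le_self hε.le hp₁) _))
      exact_mod_cast neg_nonpos.2 hε.le
  have hφX₁ : ∀ i, φ (X i) ∈ adicFiltration J 1 := fun i => by
    rw [hX i, ← map_natCast C p]
    exact add_mem (Ideal.pow_mem_of_mem _ (X_mem_adicFiltration i) p (Nat.pos_of_ne_zero hp₀))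
      (Ideal.mul_mem_right _ _ (C_mem_adicFiltration hp))
  obtain ⟨c, -, hc⟩ := EReal.lt_iff_exists_real_btwn.1 (bot_lt_iff_ne_bot.2 hf)
  exact ne_bot_of_le_ne_bot (EReal.coe_ne_bot c) (coe_le_gaussNorm_map hconst hφX hφX₁ hc.le)
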